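/- Let h₀(z) = z/(3-z) and h₁(z) = 1/(2-z). For any m ≥ 3 and any x₁,...,x_m ∈ {0,1}, we have h_{x₁} ∘ ⋯ ∘ h_{x_m}(1) − h_{x₁} ∘ ⋯ ∘ h_{x_m}(0) ≤ 9·(1 − h₁^m(0)) = 9/(m+1). -/

import Mathlib

noncomputable def h (b : Bool) (z : ℝ) : ℝ := if b then 1 / (2 - z) else z / (3 - z)

noncomputable def h1 (z : ℝ) : ℝ := 1 / (2 - z)

/-! Each `h b` is the Möbius map of an integer matrix, so a composite of `n` of them is
`z ↦ (a z + b) / (c z + d)` for the product matrix, and its width `f 1 - f 0` is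
`det / (d (c + d))`. Multiplying by a generator on the right keeps `c ≤ 0 < c + d` and
`det ≤ (c + d) ^ 2`, and raises the bound `(n + 1) det ≤ d (c + d)` from `n` to `n + 1`.
Hence the width is at most `1 / (n + 1)`, below `9 / (n + 1) = 9 (1 - h₁ⁿ(0))`. -/

open Matrix

noncomputable def moebius (M : Matrix (Fin 2) (Fin 2) ℝ) (z : ℝ) : ℝ :=
  (M 0 0 * z + M 0 1) / (M 1 0 * z + M 1 1)

-- Where the outer denominator vanishes both sides are junk `0`, so only the inner one matters.
theorem moebius_mul (M N : Matrix (Fin 2) (Fin 2) ℝ) {z : ℝ} (hz : N 1 0 * z + N 1 1 ≠ 0) :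
    moebius (M * N) z = moebius M (moebius N z) := by
  simp only [moebius, mul_apply, Fin.sum_univ_two]
  rw [mul_div_assoc', mul_div_assoc', div_add' _ _ _ hz, div_add' _ _ _ hz,
    div_div_div_cancel_right₀ hz]
  congr 1 <;> ring

def hMat (b : Bool) : Matrix (Fin 2) (Fin 2) ℝ := if b then !![0, 1; -1, 2] else !![1, 0; -1, 3]

theorem h_eq_moebius (b : Bool) (z : ℝ) : h b z = moebius (hMat b) z := by
  cases b <;> simp [h, hMat, moebius, neg_add_eq_sub]

theorem h_le_one {z : ℝ} (hz : z ≤ 1) (b : Bool) : h b z ≤ 1 := by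
  cases b <;> simp only [h, Bool.false_eq_true, if_true, if_false]
  · rw [div_le_one (by linarith)]; linarith
  · rw [div_le_one (by linarith)]; linarith

noncomputable def composite (L : List Bool) : ℝ → ℝ := (L.map h).foldr (· ∘ ·) id

theorem composite_append_singleton (L : List Bool) (b : Bool) :
    composite (L ++ [b]) = composite L ∘ h b := by
  unfold composite
  induction L with
  | nil => rfl
  | cons a L ih => simp only [List.cons_append, List.map_cons, List.foldr_cons, ih]; rfl

theorem composite_le_one (L : List Bool) {z : ℝ} (hz : z ≤ 1) : composite L z ≤ 1 := by
  induction L using List.reverseRecOn generalizing z with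
  | nil => exact hz
  | append_singleton L b ih => rw [composite_append_singleton]; exact ih (h_le_one hz b)

theorem composite_eq_moebius (L : List Bool) {z : ℝ} (hz : z ≤ 1) :
    composite L z = moebius (L.map hMat).prod z := by
  induction L using List.reverseRecOn generalizing z with
  | nil => simp [composite, moebius]
  | append_singleton L b ih =>
    have hden : hMat b 1 0 * z + hMat b 1 1 ≠ 0 := by cases b <;> simp [hMat] <;> linarith
    rw [composite_append_singleton, Function.comp_apply, ih (h_le_one hz b), h_eq_moebius,
      List.map_append, List.prod_append, List.map_singleton, List.prod_singleton, moebius_mul _ _ hden]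

structure WidthBound (n : ℕ) (M : Matrix (Fin 2) (Fin 2) ℝ) : Prop where
  den_one_pos : 0 < M 1 0 + M 1 1
  lower_left_nonpos : M 1 0 ≤ 0
  det_le : M.det ≤ (M 1 0 + M 1 1) ^ 2
  succ_mul_det_le : (n + 1) * M.det ≤ M 1 1 * (M 1 0 + M 1 1)

theorem WidthBound.one : WidthBound 0 1 := ⟨by simp, by simp, by simp, by simp⟩

theorem WidthBound.mul_hMat {n : ℕ} {M : Matrix (Fin 2) (Fin 2) ℝ} (hM : WidthBound n M)
    (b : Bool) : WidthBound (n + 1) (M * hMat b) := by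
  obtain ⟨hsum, hc, hdet, hbound⟩ := hM
  rw [det_fin_two] at hdet hbound
  constructor <;> cases b <;> simp [hMat, det_fin_two, mul_apply, Fin.sum_univ_two] <;> nlinarith

theorem WidthBound.moebius_one_sub_moebius_zero_le {n : ℕ} {M : Matrix (Fin 2) (Fin 2) ℝ}
    (hM : WidthBound n M) : moebius M 1 - moebius M 0 ≤ 1 / (n + 1) := by
  obtain ⟨hsum, hc, -, hbound⟩ := hM
  have hd : 0 < M 1 1 := by linarith
  have hwidth : moebius M 1 - moebius M 0 = M.det / (M 1 1 * (M 1 0 + M 1 1)) := by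
    rw [moebius, moebius, div_sub_div _ _ (by rw [mul_one]; exact hsum.ne')
      (by rw [mul_zero, zero_add]; exact hd.ne'), det_fin_two]
    congr 1 <;> ring
  rw [hwidth, div_le_div_iff₀ (by positivity) (by positivity)]
  linarith

theorem widthBound_prod_hMat (L : List Bool) : WidthBound L.length (L.map hMat).prod := by
  induction L using List.reverseRecOn with
  | nil => exact WidthBound.one
  | append_singleton L b ih =>
    simpa [List.prod_append] using ih.mul_hMat b

theorem composite_one_sub_composite_zero_le (L : List Bool) :
    composite L 1 - composite L 0 ≤ 1 / (L.length + 1) := by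
  rw [composite_eq_moebius L le_rfl, composite_eq_moebius L zero_le_one]
  exact (widthBound_prod_hMat L).moebius_one_sub_moebius_zero_le

theorem h1_iterate_zero (n : ℕ) : h1^[n] 0 = n / (n + 1) := by
  induction n with
  | zero => simp
  | succ n ih =>
    rw [Function.iterate_succ_apply', ih, h1, show (2 : ℝ) - n / (n + 1) = (n + 2) / (n + 1) by field_simp; ring, one_div_div]
    push_cast
    ring

theorem stmt_14_general (m : ℕ) (x : Fin m → Bool) :
    ((List.ofFn fun i => h (x i)).foldr (· ∘ ·) id) 1
      - ((List.ofFn fun i => h (x i)).foldr (· ∘ ·) id) 0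
      ≤ 9 * (1 - h1^[m] 0) ∧ 9 * (1 - h1^[m] 0) = 9 / (m + 1) := by
  have hrhs : 9 * (1 - h1^[m] 0) = 9 / (m + 1) := by
    rw [h1_iterate_zero]
    field_simp
    ring
  refine ⟨?_, hrhs⟩
  have hwidth := composite_one_sub_composite_zero_le (List.ofFn x)
  rw [List.length_ofFn] at hwidth
  rw [hrhs]
  calc _ = composite (List.ofFn x) 1 - composite (List.ofFn x) 0 := by
        rw [composite, List.map_ofFn]; rfl
    _ ≤ 1 / (m + 1) := hwidth
    _ ≤ 9 / (m + 1) := by gcongr; norm_num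

theorem stmt_14 (m : ℕ) (hm : 3 ≤ m) (x : Fin m → Bool) :
    ((List.ofFn fun i => h (x i)).foldr (· ∘ ·) id) 1
      - ((List.ofFn fun i => h (x i)).foldr (· ∘ ·) id) 0
      ≤ 9 * (1 - h1^[m] 0) ∧ 9 * (1 - h1^[m] 0) = 9 / (m + 1) :=
  stmt_14_general m x
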